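/- arXiv:2203.01031 — 4 statements merged into one kernel-verified Lean document; each statement's English description precedes it below -/
import Mathlib

section
/- Let W ⊆ V be an isotropic subspace with ordered basis (w₁,…,w_r) and set ω = ι(w₁)⋯ι(w_r) ∈ Cl(q). Then the kernel of the right-multiplication map Cl(q) → Cl(q), x ↦ x·ω, is exactly the k-linear span of {x·ι(w) : x ∈ Cl(q), w ∈ W}. In particular, right multiplication by ω induces a k-linear isomorphism from Cl(q)/span_k{x·ι(w) : x ∈ Cl(q), w ∈ W} onto the left Clifford ideal Cl(q)·ω. (This is the fiberwise form of Lemma 2.4: exactness of B_{n−1}⊗W → B_n → I_{n+r}^W ⊗ det(W)^∨ → 0.) -/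
/-!
For `v ∈ W` the vector `ι v` anticommutes with every factor of `ω` and squares to zero, so
`ι v * ω = 0`; this gives one inclusion. Conversely, if `x * ι w₁ ⋯ ι w_r = 0`, pick a
functional `φ` with `φ w₁ = 1` vanishing on `w₂, …, w_r` (linear independence). The right
contraction by `φ` satisfies `x = (x * ι w₁)⌊φ + (x⌊φ) * ι w₁` and preserves the span of
the `z * ι wᵢ` with `i ≥ 2`, so induction on `r` puts `x` in the span of the `z * ι wᵢ`.
-/

open CliffordAlgebra

namespace CliffordAlgebra

variable {k V : Type*} [Field k] [AddCommGroup V] [Module k V] {Q : QuadraticForm k V}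

theorem ι_mul_prod_map_ι_eq_zero {l : List V} {v : V} (hv : v ∈ l) (hQv : Q v = 0)
    (hortho : ∀ u ∈ l, Q.IsOrtho v u) : ι Q v * (l.map (ι Q)).prod = 0 := by
  induction l with
  | nil => simp at hv
  | cons u t ih =>
    rw [List.map_cons, List.prod_cons, ← mul_assoc]
    rcases List.mem_cons.mp hv with rfl | hvt
    · rw [ι_sq_scalar, hQv, map_zero, zero_mul]
    · rw [ι_mul_ι_comm_of_isOrtho (hortho u List.mem_cons_self), neg_mul, mul_assoc,
        ih hvt fun u hu => hortho u (List.mem_cons_of_mem _ hu), mul_zero, neg_zero]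

theorem isOrtho_of_isotropic {W : Submodule k V} (hiso : ∀ v ∈ W, Q v = 0) {u v : V}
    (hu : u ∈ W) (hv : v ∈ W) : Q.IsOrtho u v := by
  rw [QuadraticMap.IsOrtho, hiso _ (add_mem hu hv), hiso u hu, hiso v hv, add_zero]

theorem ι_mul_prod_ι_eq_zero_of_mem_span {W : Submodule k V} (hiso : ∀ v ∈ W, Q v = 0)
    {r : ℕ} {w : Fin r → V} (hw : ∀ i, w i ∈ W) {v : V}
    (hv : v ∈ Submodule.span k (Set.range w)) :
    ι Q v * (List.ofFn fun i => ι Q (w i)).prod = 0 := by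
  induction hv using Submodule.span_induction with
  | mem v hv =>
    obtain ⟨i, rfl⟩ := hv
    rw [show (List.ofFn fun i => ι Q (w i)) = (List.ofFn w).map (ι Q) from
      List.map_ofFn.symm]
    refine ι_mul_prod_map_ι_eq_zero (List.mem_ofFn.mpr ⟨i, rfl⟩) (hiso _ (hw i)) ?_
    intro u hu
    obtain ⟨j, rfl⟩ := List.mem_ofFn.mp hu
    exact isOrtho_of_isotropic hiso (hw i) (hw j)
  | zero => simp
  | add a b _ _ ha hb => rw [map_add, add_mul, ha, hb, add_zero]
  | smul c a _ ha => rw [map_smul, smul_mul_assoc, ha, smul_zero]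

variable (Q) in
/-- The left ideal generated by `ι '' T`, written as a `k`-span. -/
def spanMulι (T : Set V) : Submodule k (CliffordAlgebra Q) :=
  Submodule.span k {y | ∃ x : CliffordAlgebra Q, ∃ v ∈ T, y = x * ι Q v}

theorem mul_ι_mem_spanMulι (x : CliffordAlgebra Q) {T : Set V} {v : V} (hv : v ∈ T) :
    x * ι Q v ∈ spanMulι Q T :=
  Submodule.subset_span ⟨x, v, hv, rfl⟩

theorem spanMulι_mono {T T' : Set V} (h : T ⊆ T') : spanMulι Q T ≤ spanMulι Q T' :=
  Submodule.span_mono fun _ ⟨x, v, hv, hy⟩ => ⟨x, v, h hv, hy⟩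

theorem contractRight_mem_spanMulι {T : Set V} (φ : Module.Dual k V) (hφ : ∀ u ∈ T, φ u = 0)
    {y : CliffordAlgebra Q} (hy : y ∈ spanMulι Q T) : contractRight y φ ∈ spanMulι Q T := by
  induction hy using Submodule.span_induction with
  | mem y hy =>
    obtain ⟨z, u, hu, rfl⟩ := hy
    rw [contractRight_mul_ι, hφ u hu, zero_smul, zero_sub, neg_mem_iff]
    exact mul_ι_mem_spanMulι _ hu
  | zero => simp
  | add a b _ _ ha hb => rw [map_add]; exact add_mem ha hb
  | smul c a _ ha => rw [map_smul]; exact Submodule.smul_mem _ _ ha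

theorem mem_spanMulι_insert_of_mul_ι_mem {T : Set V} {v : V} (φ : Module.Dual k V)
    (hφv : φ v = 1) (hφT : ∀ u ∈ T, φ u = 0) {x : CliffordAlgebra Q}
    (hx : x * ι Q v ∈ spanMulι Q T) : x ∈ spanMulι Q (insert v T) := by
  have hsplit : x = contractRight (x * ι Q v) φ + contractRight x φ * ι Q v := by
    rw [contractRight_mul_ι, hφv, one_smul, sub_add_cancel]
  rw [hsplit]
  exact add_mem (spanMulι_mono (Set.subset_insert v T) (contractRight_mem_spanMulι φ hφT hx))
    (mul_ι_mem_spanMulι _ (Set.mem_insert v T))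

theorem mem_spanMulι_of_mul_prod_ι_eq_zero {r : ℕ} {w : Fin r → V}
    (hli : LinearIndependent k w) {x : CliffordAlgebra Q}
    (hx : x * (List.ofFn fun i => ι Q (w i)).prod = 0) : x ∈ spanMulι Q (Set.range w) := by
  induction r generalizing x with
  | zero => simp_all
  | succ r ih =>
    rw [linearIndependent_finSucc] at hli
    rw [List.ofFn_succ, List.prod_cons, ← mul_assoc] at hx
    obtain ⟨φ, hφ0, hφtail⟩ := Submodule.exists_dual_map_eq_bot_of_notMem hli.2 inferInstance
    have hφT : ∀ u ∈ Set.range (Fin.tail w), ((φ (w 0))⁻¹ • φ) u = 0 := fun u hu => by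
      have hφu : φ u ∈ (⊥ : Submodule k k) :=
        hφtail ▸ Submodule.mem_map_of_mem (Submodule.subset_span hu)
      simp [(Submodule.mem_bot k).mp hφu]
    rw [Fin.range_fin_succ]
    exact mem_spanMulι_insert_of_mul_ι_mem _ (by simp [hφ0]) hφT (ih hli.1 hx)

end CliffordAlgebra

theorem clifford_rightMul_ker_span_of_isotropic_general
    {k V : Type*} [Field k]
    [AddCommGroup V] [Module k V]
    (Q : QuadraticForm k V) (W : Submodule k V)
    (hiso : ∀ v ∈ W, Q v = 0)
    (r : ℕ) (w : Fin r → V)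
    (hli : LinearIndependent k w)
    (hspan : Submodule.span k (Set.range w) = W)
    (ω : CliffordAlgebra Q)
    (hω : ω = (List.ofFn fun i => ι Q (w i)).prod) :
    LinearMap.ker (LinearMap.mulRight k ω) =
      Submodule.span k {y | ∃ x : CliffordAlgebra Q, ∃ v ∈ W, y = x * ι Q v} ∧
    LinearMap.range (LinearMap.mulRight k ω) =
      Submodule.span k {y | ∃ x : CliffordAlgebra Q, y = x * ω} ∧
    Nonempty ((CliffordAlgebra Q ⧸
        Submodule.span k {y | ∃ x : CliffordAlgebra Q, ∃ v ∈ W, y = x * ι Q v}) ≃ₗ[k]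
      ↥(Submodule.span k {y | ∃ x : CliffordAlgebra Q, y = x * ω})) := by
  have hw : ∀ i, w i ∈ W := fun i => hspan ▸ Submodule.subset_span ⟨i, rfl⟩
  have hker : LinearMap.ker (LinearMap.mulRight k ω) =
      Submodule.span k {y | ∃ x : CliffordAlgebra Q, ∃ v ∈ W, y = x * ι Q v} := by
    refine le_antisymm (fun x hx => ?_) (Submodule.span_le.mpr ?_)
    · rw [LinearMap.mem_ker, LinearMap.mulRight_apply, hω] at hx
      exact spanMulι_mono (Set.range_subset_iff.mpr hw)
        (mem_spanMulι_of_mul_prod_ι_eq_zero hli hx)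
    · rintro _ ⟨x, v, hv, rfl⟩
      rw [SetLike.mem_coe, LinearMap.mem_ker, LinearMap.mulRight_apply, mul_assoc, hω,
        ι_mul_prod_ι_eq_zero_of_mem_span hiso hw (hspan ▸ hv), mul_zero]
  have hrange : LinearMap.range (LinearMap.mulRight k ω) =
      Submodule.span k {y | ∃ x : CliffordAlgebra Q, y = x * ω} := by
    rw [← Submodule.span_eq (LinearMap.range _), LinearMap.coe_range]
    congr 1
    ext y
    exact exists_congr fun x => eq_comm
  refine ⟨hker, hrange, ?_⟩
  rw [← hker, ← hrange]
  exact ⟨LinearMap.quotKerEquivRange _⟩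

/-- For an isotropic subspace `W ⊆ V` with ordered basis `w₁, …, w_r` and
`ω = ι w₁ ⋯ ι w_r`, the kernel of right multiplication by `ω` on `Cl(q)` is exactly the
`k`-span of `{x · ι w : x ∈ Cl(q), w ∈ W}`; its range is the left Clifford ideal
`Cl(q)·ω`, so right multiplication by `ω` induces a `k`-linear isomorphism from the
quotient onto `Cl(q)·ω`. -/
theorem clifford_rightMul_ker_span_of_isotropic
    {k V : Type*} [Field k] [Invertible (2 : k)]
    [AddCommGroup V] [Module k V] [FiniteDimensional k V]
    (Q : QuadraticForm k V) (W : Submodule k V)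
    (hiso : ∀ v ∈ W, Q v = 0)
    (r : ℕ) (w : Fin r → V)
    (hli : LinearIndependent k w)
    (hspan : Submodule.span k (Set.range w) = W)
    (ω : CliffordAlgebra Q)
    (hω : ω = (List.ofFn fun i => ι Q (w i)).prod) :
    LinearMap.ker (LinearMap.mulRight k ω) =
      Submodule.span k {y | ∃ x : CliffordAlgebra Q, ∃ v ∈ W, y = x * ι Q v} ∧
    LinearMap.range (LinearMap.mulRight k ω) =
      Submodule.span k {y | ∃ x : CliffordAlgebra Q, y = x * ω} ∧
    Nonempty ((CliffordAlgebra Q ⧸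
        Submodule.span k {y | ∃ x : CliffordAlgebra Q, ∃ v ∈ W, y = x * ι Q v}) ≃ₗ[k]
      ↥(Submodule.span k {y | ∃ x : CliffordAlgebra Q, y = x * ω})) :=
  clifford_rightMul_ker_span_of_isotropic_general Q W hiso r w hli hspan ω hω
end

section
/- Let W ⊆ V be an isotropic subspace with ordered basis (w₁,…,w_r) and set ω = ι(w₁)⋯ι(w_r) ∈ Cl(q). Then the kernel of the left-multiplication map Cl(q) → Cl(q), x ↦ ω·x, is exactly the k-linear span of {ι(w)·x : w ∈ W, x ∈ Cl(q)}. In particular, left multiplication by ω induces a k-linear isomorphism from Cl(q)/span_k{ι(w)·x : w ∈ W, x ∈ Cl(q)} onto the right Clifford ideal ω·Cl(q). (This is the fiberwise form of the right-ideal version of Lemma 2.4.) -/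
/-!
The `ι wᵢ` pairwise anticommute because `W` is isotropic, so for `v ∈ W` the factor `ι v` can be
moved next to itself in `ω * ι v`, and `ι v * ι v = Q v = 0`. Conversely, pick functionals `dᵢ`
with `dᵢ wⱼ = δᵢⱼ`. From `d⌋(ι a * y) = d a • y - ι a * (d⌋y)`: if `d a = 1` and `ι a * y` lies
in a subspace `N` stable under `d⌋`, then `y ∈ N + ι a * Cl(Q)`. Peeling the factors of `ω` off
one at a time, with `N` the span of the `ι wᵢ * Cl(Q)` already peeled off (stable under `dⱼ⌋`
since `dⱼ wᵢ = 0` for `i < j`), `ω * x = 0` puts `x` in the span of all `ι wᵢ * Cl(Q)`.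
-/

open CliffordAlgebra

theorem LinearIndependent.exists_dual_apply_eq_ite {K V n : Type*} [DivisionRing K]
    [AddCommGroup V] [Module K V] [DecidableEq n] {v : n → V} (hv : LinearIndependent K v) :
    ∃ d : n → Module.Dual K V, ∀ i j, d i (v j) = if j = i then 1 else 0 := by
  choose d hd using fun i => LinearMap.exists_extend ((Finsupp.lapply i).comp hv.repr)
  refine ⟨d, fun i j => ?_⟩
  have hvj : v j ∈ Submodule.span K (Set.range v) := Submodule.subset_span ⟨j, rfl⟩
  rw [show d i (v j) = _ from LinearMap.congr_fun (hd i) ⟨v j, hvj⟩]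
  simp [hv.repr_eq_single j ⟨v j, hvj⟩ rfl, Finsupp.single_apply]

namespace CliffordAlgebra

variable {R M : Type*} [CommRing R] [AddCommGroup M] [Module R M] {Q : QuadraticForm R M}

theorem list_prod_map_ι_mul_ι_of_isOrtho (l : List M) {v : M} (h : ∀ a ∈ l, Q.IsOrtho a v) :
    (l.map (ι Q)).prod * ι Q v = (-1 : R) ^ l.length • (ι Q v * (l.map (ι Q)).prod) := by
  induction l with
  | nil => simp
  | cons a t ih =>
    rw [List.forall_mem_cons] at h
    simp only [List.map_cons, List.prod_cons, List.length_cons, mul_assoc, ih h.2,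
      mul_smul_comm, ← mul_assoc (ι Q a), ι_mul_ι_comm_of_isOrtho h.1, pow_succ, mul_neg_one,
      neg_smul, neg_mul, smul_neg]

theorem list_prod_map_ι_mul_ι_eq_zero {l : List M} {v : M} (hv : v ∈ l) (hQ : Q v = 0)
    (h : ∀ a ∈ l, Q.IsOrtho a v) : (l.map (ι Q)).prod * ι Q v = 0 := by
  obtain ⟨s, t, rfl⟩ := List.append_of_mem hv
  have ht : ∀ a ∈ t, Q.IsOrtho a v := fun a ha => h a (by simp [ha])
  simp only [List.map_append, List.map_cons, List.prod_append, List.prod_cons, mul_assoc,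
    list_prod_map_ι_mul_ι_of_isOrtho t ht, mul_smul_comm, ← mul_assoc (ι Q v), ι_sq_scalar, hQ,
    map_zero, zero_mul, mul_zero, smul_zero]

theorem list_prod_map_ι_mul_ι_eq_zero_of_mem_span {l : List M}
    (hiso : ∀ v ∈ Submodule.span R {a | a ∈ l}, Q v = 0) {v : M}
    (hv : v ∈ Submodule.span R {a | a ∈ l}) : (l.map (ι Q)).prod * ι Q v = 0 := by
  induction hv using Submodule.span_induction with
  | mem a ha =>
    refine list_prod_map_ι_mul_ι_eq_zero ha (hiso a (Submodule.subset_span ha)) fun b hb => ?_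
    have hmem : ∀ c ∈ l, c ∈ Submodule.span R {a | a ∈ l} := fun c hc => Submodule.subset_span hc
    rw [QuadraticMap.isOrtho_def, hiso _ (add_mem (hmem b hb) (hmem a ha)), hiso _ (hmem b hb),
      hiso _ (hmem a ha), add_zero]
  | zero => simp
  | add a b _ _ ha hb => rw [map_add, mul_add, ha, hb, add_zero]
  | smul c a _ ha => rw [map_smul, mul_smul_comm, ha, smul_zero]

variable (Q) in
def ιMulSpan (s : Set M) : Submodule R (CliffordAlgebra Q) :=
  Submodule.span R {y | ∃ v ∈ s, ∃ x, y = ι Q v * x}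

theorem ι_mul_mem_ιMulSpan {s : Set M} {v : M} (hv : v ∈ s) (x : CliffordAlgebra Q) :
    ι Q v * x ∈ ιMulSpan Q s :=
  Submodule.subset_span ⟨v, hv, x, rfl⟩

theorem ιMulSpan_le_iff {s : Set M} {N : Submodule R (CliffordAlgebra Q)} :
    ιMulSpan Q s ≤ N ↔ ∀ v ∈ s, ∀ x, ι Q v * x ∈ N := by
  refine Submodule.span_le.trans ⟨fun h v hv x => h ⟨v, hv, x, rfl⟩, ?_⟩
  rintro h _ ⟨v, hv, x, rfl⟩
  exact h v hv x

theorem ιMulSpan_mono {s t : Set M} (hst : s ⊆ t) : ιMulSpan Q s ≤ ιMulSpan Q t :=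
  ιMulSpan_le_iff.2 fun _ hv => ι_mul_mem_ιMulSpan (hst hv)

theorem contractLeft_mem_ιMulSpan {d : Module.Dual R M} {s : Set M} (hd : ∀ v ∈ s, d v = 0)
    {y : CliffordAlgebra Q} (hy : y ∈ ιMulSpan Q s) : contractLeft d y ∈ ιMulSpan Q s := by
  suffices ιMulSpan Q s ≤ (ιMulSpan Q s).comap (contractLeft d) from this hy
  refine ιMulSpan_le_iff.2 fun v hv x => ?_
  rw [Submodule.mem_comap, contractLeft_ι_mul, hd v hv, zero_smul, zero_sub]
  exact neg_mem (ι_mul_mem_ιMulSpan hv _)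

theorem mem_sup_ιMulSpan_singleton_of_ι_mul_mem {N : Submodule R (CliffordAlgebra Q)}
    {d : Module.Dual R M} {a : M} (hda : d a = 1) (hN : ∀ y ∈ N, contractLeft d y ∈ N)
    {y : CliffordAlgebra Q} (h : ι Q a * y ∈ N) : y ∈ N ⊔ ιMulSpan Q {a} := by
  have hy : y = contractLeft d (ι Q a * y) + ι Q a * contractLeft d y := by
    rw [contractLeft_ι_mul, hda, one_smul, sub_add_cancel]
  rw [hy]
  refine Submodule.add_mem_sup (hN _ h) ?_
  exact ι_mul_mem_ιMulSpan (Set.mem_singleton a) _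

theorem mem_sup_ιMulSpan_of_list_prod_mul_mem {n : Type*} (w : n → M) (d : n → Module.Dual R M)
    (l : List n) (hd_self : ∀ i ∈ l, d i (w i) = 1)
    (hd_pair : l.Pairwise fun i j => d j (w i) = 0) (N : Submodule R (CliffordAlgebra Q))
    (hN : ∀ i ∈ l, ∀ y ∈ N, contractLeft (d i) y ∈ N) {x : CliffordAlgebra Q}
    (hx : (l.map fun i => ι Q (w i)).prod * x ∈ N) :
    x ∈ N ⊔ ιMulSpan Q {v | ∃ i ∈ l, w i = v} := by
  induction l generalizing N with
  | nil => exact Submodule.mem_sup_left (by simpa using hx)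
  | cons i t ih =>
    rw [List.forall_mem_cons] at hd_self hN
    rw [List.pairwise_cons] at hd_pair
    rw [List.map_cons, List.prod_cons, mul_assoc] at hx
    have hN' : ∀ j ∈ t, ∀ y ∈ N ⊔ ιMulSpan Q {w i},
        contractLeft (d j) y ∈ N ⊔ ιMulSpan Q {w i} := by
      intro j hj y hy
      obtain ⟨y₁, hy₁, y₂, hy₂, rfl⟩ := Submodule.mem_sup.1 hy
      rw [map_add]
      refine Submodule.add_mem_sup (hN.2 j hj y₁ hy₁) (contractLeft_mem_ιMulSpan ?_ hy₂)
      rintro _ rfl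
      exact hd_pair.1 j hj
    have hxt := ih hd_self.2 hd_pair.2 _ hN'
      (mem_sup_ιMulSpan_singleton_of_ι_mul_mem hd_self.1 hN.1 hx)
    refine sup_le (sup_le le_sup_left (le_sup_of_le_right (ιMulSpan_mono ?_)))
      (le_sup_of_le_right (ιMulSpan_mono ?_)) hxt
    · rintro _ rfl
      exact ⟨i, List.mem_cons_self, rfl⟩
    · rintro _ ⟨j, hj, rfl⟩
      exact ⟨j, List.mem_cons_of_mem i hj, rfl⟩

theorem mem_ιMulSpan_range_of_ofFn_prod_mul_eq_zero {r : ℕ} {w : Fin r → M}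
    {d : Fin r → Module.Dual R M} (hd : ∀ i j, d i (w j) = if j = i then 1 else 0)
    {x : CliffordAlgebra Q} (hx : (List.ofFn fun i => ι Q (w i)).prod * x = 0) :
    x ∈ ιMulSpan Q (Set.range w) := by
  rw [List.ofFn_eq_map] at hx
  have hpair : (List.finRange r).Pairwise fun i j => d j (w i) = 0 :=
    (List.pairwise_lt_finRange r).imp fun hij => by simp [hd, hij.ne]
  have hmem := mem_sup_ιMulSpan_of_list_prod_mul_mem w d _ (by simp [hd]) hpair ⊥
    (by simp) (hx ▸ Submodule.zero_mem ⊥)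
  rw [bot_sup_eq] at hmem
  exact ιMulSpan_mono (by rintro _ ⟨i, -, rfl⟩; exact ⟨i, rfl⟩) hmem

theorem ker_mulLeft_ofFn_prod_ι {K V : Type*} [Field K] [AddCommGroup V] [Module K V]
    {Q : QuadraticForm K V} {W : Submodule K V} (hiso : ∀ v ∈ W, Q v = 0) {r : ℕ}
    {w : Fin r → V} (hli : LinearIndependent K w) (hspan : Submodule.span K (Set.range w) = W) :
    LinearMap.ker (LinearMap.mulLeft K (List.ofFn fun i => ι Q (w i)).prod) = ιMulSpan Q W := by
  apply le_antisymm
  · intro x hx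
    obtain ⟨d, hd⟩ := hli.exists_dual_apply_eq_ite
    exact ιMulSpan_mono (hspan ▸ Submodule.subset_span)
      (mem_ιMulSpan_range_of_ofFn_prod_mul_eq_zero hd hx)
  · have hW : Submodule.span K {a | a ∈ List.ofFn w} = W := by
      rw [← hspan]
      congr 1
      ext
      exact List.mem_ofFn' w _
    refine ιMulSpan_le_iff.2 fun v hv x => ?_
    have hprod : (List.ofFn fun i => ι Q (w i)) = (List.ofFn w).map (ι Q) :=
      List.map_ofFn.symm
    rw [LinearMap.mem_ker, LinearMap.mulLeft_apply, ← mul_assoc, hprod,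
      list_prod_map_ι_mul_ι_eq_zero_of_mem_span (hW ▸ hiso) (hW ▸ hv), zero_mul]

end CliffordAlgebra

theorem clifford_leftMul_ker_span_of_isotropic_general
    {k V : Type*} [Field k]
    [AddCommGroup V] [Module k V]
    (Q : QuadraticForm k V) (W : Submodule k V)
    (hiso : ∀ v ∈ W, Q v = 0)
    (r : ℕ) (w : Fin r → V)
    (hli : LinearIndependent k w)
    (hspan : Submodule.span k (Set.range w) = W)
    (ω : CliffordAlgebra Q)
    (hω : ω = (List.ofFn fun i => ι Q (w i)).prod) :
    LinearMap.ker (LinearMap.mulLeft k ω) =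
      Submodule.span k {y | ∃ v ∈ W, ∃ x : CliffordAlgebra Q, y = ι Q v * x} ∧
    LinearMap.range (LinearMap.mulLeft k ω) =
      Submodule.span k {y | ∃ x : CliffordAlgebra Q, y = ω * x} ∧
    Nonempty ((CliffordAlgebra Q ⧸
        Submodule.span k {y | ∃ v ∈ W, ∃ x : CliffordAlgebra Q, y = ι Q v * x}) ≃ₗ[k]
      ↥(Submodule.span k {y | ∃ x : CliffordAlgebra Q, y = ω * x})) := by
  have hker : LinearMap.ker (LinearMap.mulLeft k ω) = ιMulSpan Q W :=
    hω ▸ ker_mulLeft_ofFn_prod_ι hiso hli hspan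
  have hrange : LinearMap.range (LinearMap.mulLeft k ω) =
      Submodule.span k {y | ∃ x : CliffordAlgebra Q, y = ω * x} := by
    rw [← Submodule.span_eq (LinearMap.range _)]
    congr 1
    ext y
    simp [eq_comm]
  exact ⟨hker, hrange, ⟨(Submodule.quotEquivOfEq _ _ hker.symm).trans
    ((LinearMap.quotKerEquivRange _).trans (LinearEquiv.ofEq _ _ hrange))⟩⟩

/-- For an isotropic subspace `W ⊆ V` with ordered basis `w₁, …, w_r` and
`ω = ι w₁ ⋯ ι w_r`, the kernel of left multiplication by `ω` on `Cl(q)` is exactly the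
`k`-span of `{ι w · x : w ∈ W, x ∈ Cl(q)}`; its range is the right Clifford ideal
`ω·Cl(q)`, so left multiplication by `ω` induces a `k`-linear isomorphism from the
quotient onto `ω·Cl(q)`. -/
theorem clifford_leftMul_ker_span_of_isotropic
    {k V : Type*} [Field k] [Invertible (2 : k)]
    [AddCommGroup V] [Module k V] [FiniteDimensional k V]
    (Q : QuadraticForm k V) (W : Submodule k V)
    (hiso : ∀ v ∈ W, Q v = 0)
    (r : ℕ) (w : Fin r → V)
    (hli : LinearIndependent k w)
    (hspan : Submodule.span k (Set.range w) = W)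
    (ω : CliffordAlgebra Q)
    (hω : ω = (List.ofFn fun i => ι Q (w i)).prod) :
    LinearMap.ker (LinearMap.mulLeft k ω) =
      Submodule.span k {y | ∃ v ∈ W, ∃ x : CliffordAlgebra Q, y = ι Q v * x} ∧
    LinearMap.range (LinearMap.mulLeft k ω) =
      Submodule.span k {y | ∃ x : CliffordAlgebra Q, y = ω * x} ∧
    Nonempty ((CliffordAlgebra Q ⧸
        Submodule.span k {y | ∃ v ∈ W, ∃ x : CliffordAlgebra Q, y = ι Q v * x}) ≃ₗ[k]
      ↥(Submodule.span k {y | ∃ x : CliffordAlgebra Q, y = ω * x})) :=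
  clifford_leftMul_ker_span_of_isotropic_general Q W hiso r w hli hspan ω hω
end

section
/- Let W ⊆ V be an isotropic subspace of dimension r ≥ 1 and W' ⊂ W a subspace of dimension r−1. Choose a basis (w₁,…,w_r) of W such that (w₁,…,w_{r−1}) is a basis of W', and set ω' = ι(w₁)⋯ι(w_{r−1}) and ω = ι(w₁)⋯ι(w_r). Then left multiplication by ι(w_r) maps the right Clifford ideal ω'·Cl(q) onto ω·Cl(q) (note ι(w_r)·ω' = (−1)^{r−1}ω, since the ι(wᵢ) pairwise anticommute on an isotropic subspace), and its kernel on ω'·Cl(q) is exactly ω·Cl(q); that is, {x ∈ ω'·Cl(q) : ι(w_r)·x = 0} = ω·Cl(q). (This is the fiberwise form of the right-ideal version of Lemma 2.5.) -/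
/-! Vectors of an isotropic subspace anticommute in `Cl(q)`, so `ι(w_r) ω' = ± ω' ι(w_r) = ± ω`,
which gives the image of `ω' Cl(q)`. For the kernel, take a functional `d` with `d(w_r) = 1` that
vanishes on `w₁, …, w_{r-1}`. Contraction by `d` anticommutes with each `ι(wᵢ)`, `i < r`, and the
identity `d⌋(ι(v) x) = d(v) x - ι(v) (d⌋x)` shows that `ι(w_r) x = 0` forces `x = ι(w_r) (d⌋x)`.
Hence `ω' z` killed by `ι(w_r)` equals `ι(w_r) (d⌋(ω' z)) = ± ι(w_r) ω' (d⌋z) = ω (d⌋z)`. -/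

open CliffordAlgebra LinearMap

theorem span_setOf_eq_mul_eq_range_mulLeft {R A : Type*} [CommSemiring R] [Semiring A]
    [Algebra R A] (a : A) :
    Submodule.span R {y | ∃ x : A, y = a * x} = range (mulLeft R a) := by
  have : {y | ∃ x : A, y = a * x} = Set.range (mulLeft R a) := by
    ext; simp [eq_comm]
  rw [this, ← coe_range, Submodule.span_eq]

theorem LinearMap.range_mulLeft_smul {R A : Type*} [CommSemiring R] [Semiring A] [Algebra R A]
    {c : R} (hc : IsUnit c) (a : A) : range (mulLeft R (c • a)) = range (mulLeft R a) := by
  obtain ⟨u, rfl⟩ := hc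
  apply le_antisymm
  · rintro _ ⟨x, rfl⟩
    exact ⟨(u : R) • x, by simp⟩
  · rintro _ ⟨x, rfl⟩
    exact ⟨(↑u⁻¹ : R) • x, by simp [smul_smul]⟩

theorem LinearIndependent.exists_dual_eq_one_of_ne {ι K V : Type*} [Field K] [AddCommGroup V]
    [Module K V] {v : ι → V} (hv : LinearIndependent K v) (j : ι) :
    ∃ f : Module.Dual K V, f (v j) = 1 ∧ ∀ i ≠ j, f (v i) = 0 := by
  obtain ⟨f, hfj, hf⟩ := Submodule.exists_dual_map_eq_bot_of_notMem
    (hv.notMem_span_image (s := {j}ᶜ) (x := j) (by simp)) inferInstance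
  refine ⟨(f (v j))⁻¹ • f, inv_mul_cancel₀ hfj, fun i hi => ?_⟩
  have : f (v i) ∈ Submodule.map f (Submodule.span K (v '' {j}ᶜ)) :=
    Submodule.mem_map_of_mem (Submodule.subset_span ⟨i, hi, rfl⟩)
  simp_all

namespace CliffordAlgebra

variable {R M : Type*} [CommRing R] [AddCommGroup M] [Module R M] {Q : QuadraticForm R M}

theorem ι_mul_prod_map_ι_of_isOrtho {v : M} : ∀ {l : List M}, (∀ x ∈ l, Q.IsOrtho v x) →
    ι Q v * (l.map (ι Q)).prod = ((-1 : R) ^ l.length) • ((l.map (ι Q)).prod * ι Q v)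
  | [], _ => by simp
  | x :: l, h => by
    rw [List.map_cons, List.prod_cons, ← mul_assoc, ι_mul_ι_comm_of_isOrtho (h x (by simp)),
      neg_mul, mul_assoc, ι_mul_prod_map_ι_of_isOrtho (fun y hy => h y (by simp [hy])),
      List.length_cons, pow_succ, mul_smul_comm, mul_comm, mul_smul, neg_one_smul, ← mul_assoc]

theorem contractLeft_prod_map_ι_mul {d : Module.Dual R M} : ∀ {l : List M}, (∀ x ∈ l, d x = 0) →
    ∀ z : CliffordAlgebra Q, contractLeft d ((l.map (ι Q)).prod * z) =
      ((-1 : R) ^ l.length) • ((l.map (ι Q)).prod * contractLeft d z)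
  | [], _, z => by simp
  | x :: l, h, z => by
    rw [List.map_cons, List.prod_cons, mul_assoc, contractLeft_ι_mul, h x (by simp), zero_smul,
      zero_sub, contractLeft_prod_map_ι_mul (fun y hy => h y (by simp [hy])), List.length_cons,
      pow_succ, mul_smul_comm, mul_comm, mul_smul, neg_one_smul, mul_assoc]

theorem eq_ι_mul_contractLeft_of_ι_mul_eq_zero {d : Module.Dual R M} {v : M} (hv : d v = 1)
    {x : CliffordAlgebra Q} (hx : ι Q v * x = 0) : x = ι Q v * contractLeft d x := by
  have h := contractLeft_ι_mul d v x
  rw [hx, map_zero, hv, one_smul] at h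
  exact sub_eq_zero.mp h.symm

theorem range_mulLeft_prod_map_ι_inf_ker_mulLeft_ι {l : List M} {v : M} {d : Module.Dual R M}
    (hd : ∀ x ∈ l, d x = 0) (hv : d v = 1) (hQv : Q v = 0) (hortho : ∀ x ∈ l, Q.IsOrtho v x) :
    range (mulLeft R (l.map (ι Q)).prod) ⊓ ker (mulLeft R (ι Q v)) =
      range (mulLeft R ((l.map (ι Q)).prod * ι Q v)) := by
  have hsign : ∀ y : CliffordAlgebra Q,
      ((-1 : R) ^ l.length) • ((-1 : R) ^ l.length) • y = y := fun y => by
    rw [smul_smul, ← mul_pow, neg_one_mul, neg_neg, one_pow, one_smul]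
  apply le_antisymm
  · rintro _ ⟨⟨z, rfl⟩, hker⟩
    refine ⟨contractLeft d z, ?_⟩
    simp only [SetLike.mem_coe, mem_ker, mulLeft_apply] at hker ⊢
    rw [eq_ι_mul_contractLeft_of_ι_mul_eq_zero hv hker, contractLeft_prod_map_ι_mul hd,
      mul_smul_comm, ← mul_assoc, ι_mul_prod_map_ι_of_isOrtho hortho, smul_mul_assoc, hsign]
  · rintro _ ⟨z, rfl⟩
    refine ⟨⟨ι Q v * z, (mul_assoc _ _ _).symm⟩, ?_⟩
    change ι Q v * ((l.map (ι Q)).prod * ι Q v * z) = 0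
    rw [← mul_assoc, ← mul_assoc, ι_mul_prod_map_ι_of_isOrtho hortho, smul_mul_assoc,
      mul_assoc _ (ι Q v), ι_sq_scalar, hQv, map_zero, mul_zero, smul_zero, zero_mul]

end CliffordAlgebra

theorem clifford_right_ideal_ses_of_corank_one_general
    {k V : Type*} [Field k]
    [AddCommGroup V] [Module k V]
    (Q : QuadraticForm k V) (W : Submodule k V)
    (hiso : ∀ v ∈ W, Q v = 0)
    (r : ℕ) (w : Fin (r + 1) → V)
    (hli : LinearIndependent k w)
    (hspan : Submodule.span k (Set.range w) = W)
    (ω' ω : CliffordAlgebra Q)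
    (hω' : ω' = (List.ofFn fun i : Fin r => ι Q (w i.castSucc)).prod)
    (hω : ω = ω' * ι Q (w (Fin.last r))) :
    ι Q (w (Fin.last r)) * ω' = ((-1 : k) ^ r) • ω ∧
    Submodule.map (LinearMap.mulLeft k (ι Q (w (Fin.last r))))
        (Submodule.span k {y | ∃ x : CliffordAlgebra Q, y = ω' * x}) =
      Submodule.span k {y | ∃ x : CliffordAlgebra Q, y = ω * x} ∧
    Submodule.span k {y | ∃ x : CliffordAlgebra Q, y = ω' * x} ⊓
        LinearMap.ker (LinearMap.mulLeft k (ι Q (w (Fin.last r)))) =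
      Submodule.span k {y | ∃ x : CliffordAlgebra Q, y = ω * x} := by
  obtain ⟨l, hl⟩ : ∃ l, l = List.ofFn fun i : Fin r => w i.castSucc := ⟨_, rfl⟩
  have hω'l : ω' = (l.map (ι Q)).prod := by rw [hω', hl, List.map_ofFn]; rfl
  have hwW (i : Fin (r + 1)) : w i ∈ W := hspan ▸ Submodule.subset_span ⟨i, rfl⟩
  have hortho : ∀ x ∈ l, Q.IsOrtho (w (Fin.last r)) x := by
    rintro _ hx
    obtain ⟨i, rfl⟩ := List.mem_ofFn.mp (hl ▸ hx)
    simp [QuadraticMap.IsOrtho, hiso _ (hwW _), hiso _ (W.add_mem (hwW _) (hwW _))]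
  obtain ⟨d, hd_last, hd⟩ := hli.exists_dual_eq_one_of_ne (Fin.last r)
  have hdl : ∀ x ∈ l, d x = 0 := by
    rintro _ hx
    obtain ⟨i, rfl⟩ := List.mem_ofFn.mp (hl ▸ hx)
    exact hd _ (Fin.castSucc_lt_last i).ne
  have hswap : ι Q (w (Fin.last r)) * ω' = ((-1 : k) ^ r) • ω := by
    rw [hω, hω'l, ι_mul_prod_map_ι_of_isOrtho hortho, hl, List.length_ofFn]
  simp only [span_setOf_eq_mul_eq_range_mulLeft]
  refine ⟨hswap, ?_, ?_⟩
  · rw [← range_comp, ← mulLeft_mul, hswap, range_mulLeft_smul (isUnit_neg_one.pow r)]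
  · rw [hω, hω'l]
    exact range_mulLeft_prod_map_ι_inf_ker_mulLeft_ι hdl hd_last (hiso _ (hwW _)) hortho

/-- Let `W` be an isotropic subspace with basis `w₁, …, w_{r+1}` and let
`W'` be the span of `w₁, …, w_r`. With `ω' = ι w₁ ⋯ ι w_r` and
`ω = ι w₁ ⋯ ι w_{r+1} = ω' · ι w_{r+1}`, one has `ι w_{r+1} · ω' = (−1)^r ω`, left
multiplication by `ι w_{r+1}` maps the right Clifford ideal `ω'·Cl(q)` onto `ω·Cl(q)`,
and its kernel on `ω'·Cl(q)` is exactly `ω·Cl(q)`. -/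
theorem clifford_right_ideal_ses_of_corank_one
    {k V : Type*} [Field k] [Invertible (2 : k)]
    [AddCommGroup V] [Module k V] [FiniteDimensional k V]
    (Q : QuadraticForm k V) (W W' : Submodule k V)
    (hiso : ∀ v ∈ W, Q v = 0)
    (r : ℕ) (w : Fin (r + 1) → V)
    (hli : LinearIndependent k w)
    (hspan : Submodule.span k (Set.range w) = W)
    (hspan' : Submodule.span k (Set.range fun i : Fin r => w i.castSucc) = W')
    (ω' ω : CliffordAlgebra Q)
    (hω' : ω' = (List.ofFn fun i : Fin r => ι Q (w i.castSucc)).prod)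
    (hω : ω = ω' * ι Q (w (Fin.last r))) :
    ι Q (w (Fin.last r)) * ω' = ((-1 : k) ^ r) • ω ∧
    Submodule.map (LinearMap.mulLeft k (ι Q (w (Fin.last r))))
        (Submodule.span k {y | ∃ x : CliffordAlgebra Q, y = ω' * x}) =
      Submodule.span k {y | ∃ x : CliffordAlgebra Q, y = ω * x} ∧
    Submodule.span k {y | ∃ x : CliffordAlgebra Q, y = ω' * x} ⊓
        LinearMap.ker (LinearMap.mulLeft k (ι Q (w (Fin.last r)))) =
      Submodule.span k {y | ∃ x : CliffordAlgebra Q, y = ω * x} :=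
  clifford_right_ideal_ses_of_corank_one_general Q W hiso r w hli hspan ω' ω hω' hω
end

section
/- Suppose q is not identically zero. Then for all i, j ∈ ℤ/2, the k-linear span of the set of products {x·y : x ∈ Cl(q)ᵢ, y ∈ Cl(q)ⱼ} equals Cl(q)_{i+j}. In particular, the even Clifford algebra Cl(q)₀ is spanned by products of pairs of odd elements. (This is the fiberwise form of the statement that for a primitive quadratic form the Clifford multiplication maps B_n ⊗_{B₀} B_m → B_{n+m} are isomorphisms, so that B₁ is an invertible B₀-bimodule.) -/
open CliffordAlgebra

/-! A vector `v` with `Q v` a unit gives a homogeneous unit `ι v` of odd degree, with inverse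
`(Q v)⁻¹ • ι v` also odd. So every grade `i` contains some `u` with a right inverse `w` in the same
grade, and any `z` of grade `i + j` factors as `u * (w * z)` with `w * z` of grade `i + i + j = j`. -/

namespace CliffordAlgebra

variable {R M : Type*} [CommRing R] [AddCommGroup M] [Module R M] {Q : QuadraticForm R M}

theorem exists_evenOdd_mul_eq_one_of_isUnit {v : M} (hv : IsUnit (Q v)) (i : ZMod 2) :
    ∃ u ∈ evenOdd Q i, ∃ w ∈ evenOdd Q i, u * w = 1 := by
  have one_mem : (1 : CliffordAlgebra Q) ∈ evenOdd Q 0 :=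
    Submodule.one_le.mp (one_le_evenOdd_zero Q)
  fin_cases i
  · exact ⟨1, one_mem, 1, one_mem, one_mul 1⟩
  · refine ⟨ι Q v, ι_mem_evenOdd_one Q v, hv.unit⁻¹.val • ι Q v,
      Submodule.smul_mem _ _ (ι_mem_evenOdd_one Q v), ?_⟩
    rw [mul_smul_comm, ι_sq_scalar, Algebra.smul_def, ← map_mul, IsUnit.val_inv_mul, map_one]

theorem evenOdd_mul_evenOdd_of_isUnit {v : M} (hv : IsUnit (Q v)) (i j : ZMod 2) :
    evenOdd Q i * evenOdd Q j = evenOdd Q (i + j) := by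
  refine le_antisymm (evenOdd_mul_le Q i j) fun z hz => ?_
  obtain ⟨u, hu, w, hw, huw⟩ := exists_evenOdd_mul_eq_one_of_isUnit hv i
  have hwz : w * z ∈ evenOdd Q j := by
    simpa [← add_assoc, CharTwo.add_self_eq_zero] using
      SetLike.mul_mem_graded (A := evenOdd Q) hw hz
  simpa [← mul_assoc, huw] using Submodule.mul_mem_mul hu hwz

end CliffordAlgebra

theorem clifford_evenOdd_mul_span_general
    {k V : Type*} [Field k]
    [AddCommGroup V] [Module k V]
    (Q : QuadraticForm k V) (hQ : Q ≠ 0) :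
    ∀ i j : ZMod 2,
      Submodule.span k
          {z : CliffordAlgebra Q |
            ∃ x ∈ evenOdd Q i, ∃ y ∈ evenOdd Q j, z = x * y} =
        evenOdd Q (i + j) := by
  obtain ⟨v, hv⟩ := DFunLike.ne_iff.mp hQ
  intro i j
  rw [← evenOdd_mul_evenOdd_of_isUnit (isUnit_iff_ne_zero.mpr hv), Submodule.mul_eq_span_mul_set]
  congr 1
  ext z
  simp only [Set.mem_ofPred_eq, Set.mem_mul, SetLike.mem_coe, eq_comm]

/-- If `q` is not identically zero, then for all `i, j ∈ ℤ/2` the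
`k`-linear span of the products `{x·y : x ∈ Cl(q)ᵢ, y ∈ Cl(q)ⱼ}` is all of
`Cl(q)_{i+j}`; in particular the even Clifford algebra is spanned by products of pairs
of odd elements. -/
theorem clifford_evenOdd_mul_span
    {k V : Type*} [Field k] [Invertible (2 : k)]
    [AddCommGroup V] [Module k V] [FiniteDimensional k V]
    (Q : QuadraticForm k V) (hQ : Q ≠ 0) :
    ∀ i j : ZMod 2,
      Submodule.span k
          {z : CliffordAlgebra Q |
            ∃ x ∈ evenOdd Q i, ∃ y ∈ evenOdd Q j, z = x * y} =
        evenOdd Q (i + j) :=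
  clifford_evenOdd_mul_span_general Q hQ
end
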